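/- Fix s ∈ {1,2} and h ∈ ℝ, and let Ψ_h(p) = exp(h·cv_s(p)) for p ∈ (0,1), where cv₁(p) = Φ⁻¹(1−p) and cv₂(p) = Φ⁻¹(1−p/2). Then for every integer k ≥ 1 there exist polynomials A^k_0, …, A^k_{k−1} with nonnegative real coefficients (independent of h, p, and s) such that the k-th derivative of Ψ_h satisfies Ψ_h^{(k)}(p) = (−1)^k · [h · Σ_{j=0}^{k−1} A^k_j(cv_s(p)) · (cv_s(p) + h)^j] / [s^k · φ(cv_s(p))^k] · exp(h·cv_s(p)) for all p ∈ (0,1). -/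

import Mathlib

open MeasureTheory

/-- The standard normal density φ(x) = (2π)^{-1/2} exp(-x²/2). -/
noncomputable def stdNormalPdf (x : ℝ) : ℝ :=
  (Real.sqrt (2 * Real.pi))⁻¹ * Real.exp (-x ^ 2 / 2)

/-- The standard normal CDF Φ(x) = ∫_{-∞}^x φ(t) dt. -/
noncomputable def stdNormalCdf (x : ℝ) : ℝ :=
  ∫ t in Set.Iic x, stdNormalPdf t

/-!
Write `c = cv p`. Inverting `Φ (cv p) = 1 - p / s` gives `cv' = -1 / (s φ(c))`, so differentiating
in `p` is the operator `D = -(s φ(c))⁻¹ d/dc` acting on functions of `c`. Since `φ' = -c φ`, applying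
`D` to `(-1)^k h S_k(c) e^{hc} / (s φ(c))^k` yields the same shape with
`S_{k+1} = S_k' + ((c + h) + (k - 1) c) S_k`. Writing `S_k = ∑ A^k_j(c) (c + h)^j`, the derivative
`d/dc` acts both on `A^k_j` and on `(c + h)^j`, and the recursion for `A^{k+1}` only adds and
multiplies by nonnegative constants and by `X`, so nonnegativity of the coefficients is inherited.
-/

open Filter Topology Set

lemma stdNormalPdf_eq_gaussianPDFReal : stdNormalPdf = ProbabilityTheory.gaussianPDFReal 0 1 := by
  ext x
  simp [stdNormalPdf, ProbabilityTheory.gaussianPDFReal]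

lemma stdNormalPdf_pos (x : ℝ) : 0 < stdNormalPdf x := by
  unfold stdNormalPdf
  positivity

lemma integrable_stdNormalPdf : Integrable stdNormalPdf := by
  rw [stdNormalPdf_eq_gaussianPDFReal]
  exact ProbabilityTheory.integrable_gaussianPDFReal 0 1

lemma continuous_stdNormalPdf : Continuous stdNormalPdf := by
  unfold stdNormalPdf
  fun_prop

lemma hasDerivAt_stdNormalPdf (x : ℝ) : HasDerivAt stdNormalPdf (-x * stdNormalPdf x) x := by
  unfold stdNormalPdf
  refine ((((hasDerivAt_pow 2 x).fun_neg.div_const 2).exp).const_mul _).congr_deriv ?_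
  ring

lemma hasDerivAt_stdNormalCdf (x : ℝ) : HasDerivAt stdNormalCdf (stdNormalPdf x) x := by
  have hI {a : ℝ} : IntegrableOn stdNormalPdf (Iic a) := integrable_stdNormalPdf.integrableOn
  have hcdf : stdNormalCdf = fun y => stdNormalCdf 0 + ∫ t in (0 : ℝ)..y, stdNormalPdf t := by
    ext y
    rw [← intervalIntegral.integral_Iic_sub_Iic hI hI, stdNormalCdf, stdNormalCdf]
    ring
  rw [hcdf]
  exact (intervalIntegral.integral_hasDerivAt_right integrable_stdNormalPdf.intervalIntegrable
    (continuous_stdNormalPdf.stronglyMeasurableAtFilter _ _)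
    continuous_stdNormalPdf.continuousAt).const_add _

lemma strictMono_stdNormalCdf : StrictMono stdNormalCdf :=
  strictMono_of_hasDerivAt_pos hasDerivAt_stdNormalCdf stdNormalPdf_pos

lemma continuousAt_of_strictMono_comp {F g : ℝ → ℝ} {p : ℝ} (hFm : StrictMono F)
    (hFc : Continuous F) (hg : ContinuousAt (F ∘ g) p) : ContinuousAt g p :=
  (hFm.isEmbedding_of_ordConnected (isPreconnected_range hFc).ordConnected).isInducing
    |>.continuousAt_iff.mpr hg

lemma hasDerivAt_of_strictMono_comp_eq_one_sub_div {F g : ℝ → ℝ} {d σ p : ℝ}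
    (hFm : StrictMono F) (hFc : Continuous F) (hF : HasDerivAt F d (g p)) (hd : d ≠ 0)
    (hσ : σ ≠ 0) (hg : ∀ᶠ q in 𝓝 p, F (g q) = 1 - q / σ) :
    HasDerivAt g (-(σ * d))⁻¹ p := by
  have hcont : ContinuousAt g p :=
    continuousAt_of_strictMono_comp hFm hFc <|
      (continuousAt_const.sub (continuousAt_id.div_const σ)).congr (hg.mono fun q hq => hq.symm)
  have hinv : ∀ᶠ q in 𝓝 p, σ * (1 - F (g q)) = q :=
    hg.mono fun q hq => by rw [hq]; field_simp; ring
  refine HasDerivAt.of_local_left_inverse (f := fun x => σ * (1 - F x)) hcont ?_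
    (by simpa using ⟨hσ, hd⟩) hinv
  exact ((hF.const_sub 1).const_mul σ).congr_deriv (by ring)

lemma hasDerivAt_of_stdNormalCdf_comp_eq_one_sub_div {g : ℝ → ℝ} {σ p : ℝ} (hσ : σ ≠ 0)
    (hg : ∀ᶠ q in 𝓝 p, stdNormalCdf (g q) = 1 - q / σ) :
    HasDerivAt g (-(σ * stdNormalPdf (g p)))⁻¹ p :=
  hasDerivAt_of_strictMono_comp_eq_one_sub_div strictMono_stdNormalCdf
    (continuous_iff_continuousAt.mpr fun x => (hasDerivAt_stdNormalCdf x).continuousAt)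
    (hasDerivAt_stdNormalCdf _) (stdNormalPdf_pos _).ne' hσ hg

open Polynomial Finset

/-- `coeffStep m A j` is the coefficient of `(c + h) ^ j` in `S' + ((c + h) + m c) S` for
`S = ∑ j, A j (c) (c + h) ^ j`; thus `A^{k+1} = coeffStep (k - 1) A^k`. -/
noncomputable def coeffStep (m : ℕ) (A : ℕ → ℝ[X]) (j : ℕ) : ℝ[X] :=
  derivative (A j) + C ((j : ℝ) + 1) * A (j + 1) + C (m : ℝ) * (X * A j) +
    if j = 0 then 0 else A (j - 1)

section coeffStep

variable {m k : ℕ} {A : ℕ → ℝ[X]}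

lemma coeffStep_coeff_nonneg (hA : ∀ j i, 0 ≤ (A j).coeff i) (j i : ℕ) :
    0 ≤ (coeffStep m A j).coeff i := by
  have hXA : 0 ≤ (X * A j).coeff i := by
    cases i with
    | zero => simp
    | succ i => rw [coeff_X_mul]; exact hA j i
  have hprev : 0 ≤ (if j = 0 then (0 : ℝ[X]) else A (j - 1)).coeff i := by
    split_ifs
    · simp
    · exact hA _ i
  simp only [coeffStep, coeff_add, coeff_derivative, coeff_C_mul]
  have := hA j (i + 1)
  have := hA (j + 1) i
  positivity

lemma coeffStep_eq_zero (hA : ∀ j, k ≤ j → A j = 0) {j : ℕ} (hj : k + 1 ≤ j) :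
    coeffStep m A j = 0 := by
  simp [coeffStep, hA j (by omega), hA (j + 1) (by omega), hA (j - 1) (by omega),
    show j ≠ 0 by omega]

lemma sum_coeffStep_eval_mul_pow (hA : ∀ j, k ≤ j → A j = 0) (c y : ℝ) :
    ∑ j ∈ range (k + 1), (coeffStep m A j).eval c * y ^ j =
      ∑ j ∈ range k, ((A j).derivative.eval c * y ^ j + (A j).eval c * (j * y ^ (j - 1))) +
        (m * c + y) * ∑ j ∈ range k, (A j).eval c * y ^ j := by
  have hk : A k = 0 := hA k le_rfl
  have hderiv : ∑ j ∈ range (k + 1), (A j).derivative.eval c * y ^ j =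
      ∑ j ∈ range k, (A j).derivative.eval c * y ^ j := by
    simp [sum_range_succ, hk]
  have hnext : ∑ j ∈ range (k + 1), ((j : ℝ) + 1) * (A (j + 1)).eval c * y ^ j =
      ∑ j ∈ range k, (A j).eval c * (j * y ^ (j - 1)) := by
    have hshift : ∑ j ∈ range k, (A j).eval c * (j * y ^ (j - 1)) =
        ∑ j ∈ range (k + 1), (A j).eval c * (j * y ^ (j - 1)) := by
      simp [sum_range_succ, hk]
    rw [hshift, sum_range_succ, sum_range_succ', hA (k + 1) k.le_succ]
    simp only [eval_zero, mul_zero, zero_mul, add_zero, Nat.cast_zero, Nat.add_sub_cancel]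
    exact sum_congr rfl fun j _ => by push_cast; ring
  have hprev : ∑ j ∈ range (k + 1), (if j = 0 then 0 else (A (j - 1)).eval c) * y ^ j =
      y * ∑ j ∈ range k, (A j).eval c * y ^ j := by
    rw [sum_range_succ', mul_sum]
    simp only [Nat.add_one_ne_zero, if_false, Nat.add_sub_cancel, if_true, zero_mul, add_zero]
    exact sum_congr rfl fun j _ => by ring
  have hmul : ∑ j ∈ range (k + 1), (m : ℝ) * (c * ((A j).eval c * y ^ j)) =
      m * c * ∑ j ∈ range k, (A j).eval c * y ^ j := by
    rw [sum_range_succ, hk, mul_sum]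
    simp only [eval_zero, zero_mul, mul_zero, add_zero]
    exact sum_congr rfl fun j _ => by ring
  have hterm : ∀ j, (coeffStep m A j).eval c * y ^ j =
      (A j).derivative.eval c * y ^ j + ((j : ℝ) + 1) * (A (j + 1)).eval c * y ^ j +
        (m : ℝ) * (c * ((A j).eval c * y ^ j)) +
        (if j = 0 then 0 else (A (j - 1)).eval c) * y ^ j := by
    intro j
    simp only [coeffStep, eval_add, eval_mul, eval_C, eval_X, apply_ite (eval c), eval_zero]
    ring
  simp only [hterm, sum_add_distrib, hderiv, hnext, hmul, hprev]
  ring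

end coeffStep

noncomputable def derivCoeff : ℕ → ℕ → ℝ[X]
  | 0 => 0
  | 1 => fun j => if j = 0 then 1 else 0
  | k + 2 => coeffStep k (derivCoeff (k + 1))

lemma derivCoeff_coeff_nonneg : ∀ k j i, 0 ≤ (derivCoeff k j).coeff i
  | 0, _, _ => by simp [derivCoeff]
  | 1, j, i => by
    unfold derivCoeff
    split_ifs <;> simp [coeff_one, apply_ite]
  | k + 2, j, i => coeffStep_coeff_nonneg (derivCoeff_coeff_nonneg (k + 1)) j i

lemma derivCoeff_eq_zero : ∀ {k j : ℕ}, k ≤ j → derivCoeff k j = 0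
  | 0, _, _ => rfl
  | 1, j, hj => by simp [derivCoeff, show j ≠ 0 by omega]
  | k + 2, _, hj => coeffStep_eq_zero (fun _ => derivCoeff_eq_zero) hj

lemma hasDerivAt_sum_eval_mul_pow (A : ℕ → ℝ[X]) (k : ℕ) (h c : ℝ) :
    HasDerivAt (fun x => ∑ j ∈ range k, (A j).eval x * (x + h) ^ j)
      (∑ j ∈ range k, ((A j).derivative.eval c * (c + h) ^ j +
        (A j).eval c * (j * (c + h) ^ (j - 1)))) c := by
  refine HasDerivAt.fun_sum fun j _ => ?_
  refine ((A j).hasDerivAt c).mul (((hasDerivAt_id c).add_const h).pow j) |>.congr_deriv ?_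
  simp

noncomputable def psiDeriv (σ h : ℝ) (k : ℕ) (c : ℝ) : ℝ :=
  (-1) ^ k * (h * ∑ j ∈ range k, (derivCoeff k j).eval c * (c + h) ^ j) /
    (σ ^ k * stdNormalPdf c ^ k) * Real.exp (h * c)

lemma hasDerivAt_psiDeriv {σ : ℝ} (hσ : σ ≠ 0) (h : ℝ) {k : ℕ} (hk : 1 ≤ k) (c : ℝ) :
    HasDerivAt (psiDeriv σ h k) (-(σ * stdNormalPdf c) * psiDeriv σ h (k + 1) c) c := by
  obtain ⟨n, rfl⟩ : ∃ n, k = n + 1 := ⟨k - 1, by omega⟩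
  have hφ := (stdNormalPdf_pos c).ne'
  have hnum := ((hasDerivAt_sum_eval_mul_pow (derivCoeff (n + 1)) (n + 1) h c).const_mul h)
    |>.const_mul ((-1 : ℝ) ^ (n + 1))
  have hden := ((hasDerivAt_stdNormalPdf c).fun_pow (n + 1)).const_mul (σ ^ (n + 1))
  have hexp := ((hasDerivAt_id c).const_mul h).exp
  refine (hnum.fun_div hden (by positivity)).fun_mul hexp |>.congr_deriv ?_
  rw [psiDeriv, show n + 1 + 1 = n + 2 from rfl, derivCoeff,
    sum_coeffStep_eval_mul_pow fun _ => derivCoeff_eq_zero]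
  simp only [id, Nat.add_sub_cancel]
  push_cast
  field_simp
  ring

lemma iteratedDeriv_exp_mul_eq_psiDeriv {σ : ℝ} (hσ : σ ≠ 0) {U : Set ℝ} (hU : IsOpen U)
    {cv : ℝ → ℝ} (hcv : ∀ q ∈ U, stdNormalCdf (cv q) = 1 - q / σ) (h : ℝ) {k : ℕ} (hk : 1 ≤ k) :
    ∀ p ∈ U, iteratedDeriv k (fun q => Real.exp (h * cv q)) p = psiDeriv σ h k (cv p) := by
  have hcv' {p : ℝ} (hp : p ∈ U) : HasDerivAt cv (-(σ * stdNormalPdf (cv p)))⁻¹ p :=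
    hasDerivAt_of_stdNormalCdf_comp_eq_one_sub_div hσ (eventually_of_mem (hU.mem_nhds hp) hcv)
  have hφ {p : ℝ} : σ * stdNormalPdf (cv p) ≠ 0 := mul_ne_zero hσ (stdNormalPdf_pos _).ne'
  induction k, hk using Nat.le_induction with
  | base =>
    intro p hp
    rw [iteratedDeriv_one, ((hcv' hp).const_mul h).exp.deriv]
    simp only [psiDeriv, derivCoeff, pow_one, range_one, sum_singleton, if_pos, eval_one,
      pow_zero, mul_one]
    field_simp
  | succ k hk ih =>
    intro p hp
    have hchain := (hasDerivAt_psiDeriv hσ h hk (cv p)).comp p (hcv' hp)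
    have hlocal : iteratedDeriv k (fun q => Real.exp (h * cv q)) =ᶠ[𝓝 p] psiDeriv σ h k ∘ cv :=
      eventually_of_mem (hU.mem_nhds hp) ih
    rw [iteratedDeriv_succ, hlocal.deriv_eq,
      hchain.deriv, mul_right_comm, mul_inv_cancel₀ (neg_ne_zero.mpr hφ), one_mul]

/-- for s ∈ {1,2}, let cv_s(p) = Φ⁻¹(1 − p/s) on (0,1) (so cv₁(p) = Φ⁻¹(1−p)
and cv₂(p) = Φ⁻¹(1−p/2)) and Ψ_h(p) = exp(h·cv_s(p)). For every integer k ≥ 1 there exist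
polynomials A^k_0, …, A^k_{k−1} with nonnegative coefficients, independent of h, p and s,
such that for all p ∈ (0,1),
Ψ_h^{(k)}(p) = (−1)^k·[h·Σ_{j<k} A^k_j(cv_s(p))·(cv_s(p)+h)^j] / [s^k·φ(cv_s(p))^k]
                · exp(h·cv_s(p)). -/
theorem stmt_10 :
    ∀ k : ℕ, 1 ≤ k →
      ∃ A : ℕ → Polynomial ℝ,
        (∀ j i : ℕ, 0 ≤ (A j).coeff i) ∧
        ∀ s : ℕ, (s = 1 ∨ s = 2) →
          ∀ cv : ℝ → ℝ, (∀ p ∈ Set.Ioo (0 : ℝ) 1, stdNormalCdf (cv p) = 1 - p / s) →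
            ∀ h : ℝ, ∀ p ∈ Set.Ioo (0 : ℝ) 1,
              iteratedDeriv k (fun q => Real.exp (h * cv q)) p =
                (-1 : ℝ) ^ k *
                  (h * ∑ j ∈ Finset.range k, (A j).eval (cv p) * (cv p + h) ^ j) /
                    ((s : ℝ) ^ k * stdNormalPdf (cv p) ^ k) *
                  Real.exp (h * cv p) := by
  intro k hk
  refine ⟨derivCoeff k, derivCoeff_coeff_nonneg k, fun s hs cv hcv h => ?_⟩
  have hs0 : (s : ℝ) ≠ 0 := by rcases hs with rfl | rfl <;> norm_num
  exact iteratedDeriv_exp_mul_eq_psiDeriv hs0 isOpen_Ioo hcv h hk
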